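/- Möbius matrix multiplication is compatible with matrix composition: (MN) ⊗_c x = M ⊗_c (N ⊗_c x), for all nonzero x in the Poincaré ball such that Nx ≠ 0 and MNx ≠ 0, provided M and N are scalar multiples of orthogonal maps (so that ‖M y‖/‖y‖ is constant). -/
import Mathlib

noncomputable def artanh (t : ℝ) : ℝ := (1 / 2) * Real.log ((1 + t) / (1 - t))

noncomputable def mobiusMat {E : Type*} [NormedAddCommGroup E] [InnerProductSpace ℝ E]
    (c : ℝ) (M : E →ₗ[ℝ] E) (x : E) : E :=
  ((1 / Real.sqrt c) * Real.tanh ((‖M x‖ / ‖x‖) * artanh (Real.sqrt c * ‖x‖)) / ‖M x‖) • M x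

lemma artanh_tanh' (t : ℝ) : artanh (Real.tanh t) = t := by
  have hc : (0:ℝ) < Real.cosh t := Real.cosh_pos t
  have h1 : 1 + Real.tanh t = Real.exp t / Real.cosh t := by
    rw [Real.tanh_eq_sinh_div_cosh, ← Real.cosh_add_sinh]; field_simp
  have h2 : 1 - Real.tanh t = Real.exp (-t) / Real.cosh t := by
    rw [Real.tanh_eq_sinh_div_cosh, ← Real.cosh_sub_sinh]; field_simp
  have key : (1 + Real.tanh t) / (1 - Real.tanh t) = Real.exp (2 * t) := by
    rw [h1, h2, div_div_div_cancel_right₀, ← Real.exp_sub]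
    · ring_nf
    · exact hc.ne'
  rw [artanh, key, Real.log_exp]; ring

lemma tanh_pos' {t : ℝ} (ht : 0 < t) : 0 < Real.tanh t := by
  rw [Real.tanh_eq_sinh_div_cosh]
  exact div_pos (Real.sinh_pos_iff.2 ht) (Real.cosh_pos t)

theorem mobiusMat_comp {E : Type*} [NormedAddCommGroup E] [InnerProductSpace ℝ E]
    (c : ℝ) (hc : 0 < c) (M N : E →ₗ[ℝ] E) (U V : E →ₗ[ℝ] E)
    (α β : ℝ) (hα : 0 < α) (hβ : 0 < β)
    (hU : ∀ y : E, ‖U y‖ = ‖y‖) (hV : ∀ y : E, ‖V y‖ = ‖y‖)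
    (hM : M = α • U) (hN : N = β • V)
    (x : E) (hx0 : x ≠ 0) (hx : c * ‖x‖ ^ 2 < 1)
    (hNx : N x ≠ 0) (hMNx : M (N x) ≠ 0) :
    mobiusMat c (M ∘ₗ N) x = mobiusMat c M (mobiusMat c N x) := by
  have hcs : 0 < Real.sqrt c := Real.sqrt_pos.2 hc
  have hxn : 0 < ‖x‖ := norm_pos_iff.2 hx0
  have hu0 : 0 < Real.sqrt c * ‖x‖ := mul_pos hcs hxn
  have hu1 : Real.sqrt c * ‖x‖ < 1 := by
    nlinarith [Real.sq_sqrt hc.le]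
  set a : ℝ := artanh (Real.sqrt c * ‖x‖) with hadef
  have ha : 0 < a := by
    have h1 : (1:ℝ) < (1 + Real.sqrt c * ‖x‖) / (1 - Real.sqrt c * ‖x‖) := by
      rw [lt_div_iff₀ (by linarith)]; linarith
    have := Real.log_pos h1
    rw [hadef, artanh]; linarith
  have hMn : ∀ z : E, ‖M z‖ = α * ‖z‖ := by
    intro z; rw [hM]; simp [norm_smul, abs_of_pos hα, hU]
  have hNn : ∀ z : E, ‖N z‖ = β * ‖z‖ := by
    intro z; rw [hN]; simp [norm_smul, abs_of_pos hβ, hV]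
  have hNxn : 0 < ‖N x‖ := norm_pos_iff.2 hNx
  have hMNn : 0 < ‖M (N x)‖ := norm_pos_iff.2 hMNx
  have htanh : 0 < Real.tanh (β * a) := tanh_pos' (mul_pos hβ ha)
  set s : ℝ := 1 / Real.sqrt c * Real.tanh (β * a) / ‖N x‖ with hsdef
  have hs : 0 < s := div_pos (mul_pos (by positivity) htanh) hNxn
  have hb : ‖N x‖ / ‖x‖ = β := by rw [hNn x]; field_simp
  have hy : mobiusMat c N x = s • N x := by
    rw [mobiusMat, hb, ← hadef, hsdef]
  have hyn : ‖mobiusMat c N x‖ = 1 / Real.sqrt c * Real.tanh (β * a) := by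
    rw [hy, norm_smul, Real.norm_eq_abs, abs_of_pos hs, hsdef]
    field_simp
  have hsy : Real.sqrt c * ‖mobiusMat c N x‖ = Real.tanh (β * a) := by
    rw [hyn]; field_simp
  have hMy : M (mobiusMat c N x) = s • M (N x) := by rw [hy, map_smul]
  have hMyn : ‖M (mobiusMat c N x)‖ = s * ‖M (N x)‖ := by
    rw [hMy, norm_smul, Real.norm_eq_abs, abs_of_pos hs]
  have hyn0 : 0 < ‖mobiusMat c N x‖ := by
    rw [hyn]; exact mul_pos (by positivity) htanh
  have hratio : ‖M (mobiusMat c N x)‖ / ‖mobiusMat c N x‖ = α := by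
    rw [hMn]; field_simp
  have hratio2 : ‖(M ∘ₗ N) x‖ / ‖x‖ = α * β := by
    simp only [LinearMap.comp_apply]; rw [hMn, hNn]; field_simp
  rw [mobiusMat, mobiusMat, hratio2, hratio, hsy, artanh_tanh', hMyn, hMy, smul_smul]
  simp only [LinearMap.comp_apply]
  rw [← hadef, mul_assoc α β a]
  congr 1
  field_simp
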